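/- Linear convergence of the tensor splitting algorithm: if ς = (2k−3)α(1−α)^{−(k−2)/(k−1)} < 1 and y₀ ∈ Δ, then the iterates y_{c+1} = Φ(y_c) satisfy ‖y_c − y_*‖_1 ≤ ς^c ‖y₀ − y_*‖_1, where y_* ∈ Δ is the unique MLPPR solution; in particular y_c → y_*. -/

import Mathlib

open Finset Real

noncomputable def contr {n m : ℕ} (P : Fin n → (Fin m → Fin n) → ℝ) (y : Fin n → ℝ) : Fin n → ℝ :=
  fun i => ∑ j : Fin m → Fin n, P i j * ∏ s, y (j s)

noncomputable def Phi {n : ℕ} (k : ℕ) (P : Fin n → (Fin (k-1) → Fin n) → ℝ) (v : Fin n → ℝ)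
    (α : ℝ) (y : Fin n → ℝ) : Fin n → ℝ :=
  fun i => (1 + α * ∑ l, contr P y l) ^ (-((k:ℝ)-2)/((k:ℝ)-1)) * (v i + α * contr P y i)

/-!
Put `M = (1 - α) ^ (-1 / (k - 1))`, so that `M ^ (k - 1) = (1 - α)⁻¹`, and `θ = (k - 2) / (k - 1)`.
For `x, y ∈ Δ` with normalising factors `a = 1 + α eᵀ P̄ x^{k-1} ≤ b = 1 + α eᵀ P̄ y^{k-1}`,
`Φ x - Φ y = (a^{-θ} - b^{-θ}) (v + α P̄ x^{k-1}) + b^{-θ} α (P̄ x^{k-1} - P̄ y^{k-1})`.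
The first vector has 1-norm `a`, and Bernoulli's inequality gives
`a (a^{-θ} - b^{-θ}) ≤ θ (b - a) ≤ θ α ‖P̄ x^{k-1} - P̄ y^{k-1}‖₁`; the second term is at most
`α` times the same norm. Peeling off one tensor factor at a time bounds that norm by
`(k - 1) M^{k-2} ‖x - y‖₁`, and `(1 + θ)(k - 1) = 2k - 3`, so `Φ` is a `ς`-contraction of `Δ`
fixing `y_*`.
-/

/-- The paper's `Δ` is `solidSimplex (Fin n) ((1 - α) ^ (-1 / (k - 1)))`. -/
def solidSimplex (ι : Type*) [Fintype ι] (r : ℝ) : Set (ι → ℝ) :=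
  {y | (∀ i, 0 ≤ y i) ∧ ∑ i, y i ≤ r}

lemma mul_rpow_neg_sub_rpow_neg_le {a b θ : ℝ} (hθ0 : 0 ≤ θ) (hθ1 : θ ≤ 1) (ha : 0 < a)
    (hab : a ≤ b) (hb : 1 ≤ b) : a * (a ^ (-θ) - b ^ (-θ)) ≤ θ * (b - a) := by
  have hb0 : 0 < b := ha.trans_le hab
  have haθ : 0 < a ^ θ := rpow_pos_of_pos ha θ
  have bernoulli : (b / a) ^ θ ≤ 1 + θ * (b / a - 1) := by
    simpa using rpow_one_add_le_one_add_mul_self (s := b / a - 1)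
      (by linarith [div_pos hb0 ha]) hθ0 hθ1
  have key : a * (b ^ θ - a ^ θ) ≤ a ^ θ * (θ * (b - a)) := by
    rw [div_rpow hb0.le ha.le, div_le_iff₀ haθ] at bernoulli
    calc a * (b ^ θ - a ^ θ) ≤ a * (a ^ θ * (θ * (b / a - 1))) := by gcongr; linarith
      _ = a ^ θ * (θ * (b - a)) := by field_simp
  calc a * (a ^ (-θ) - b ^ (-θ)) = a * (b ^ θ - a ^ θ) / (a ^ θ * b ^ θ) := by
        rw [rpow_neg ha.le, rpow_neg hb0.le]; field_simp
    _ ≤ a ^ θ * (θ * (b - a)) / (a ^ θ * b ^ θ) := by gcongr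
    _ = θ * (b - a) / b ^ θ := by field_simp
    _ ≤ θ * (b - a) := div_le_self (by nlinarith) (one_le_rpow hb hθ0)

lemma sum_abs_prod_sub_prod_le {ι : Type*} [Fintype ι] {x y : ι → ℝ} {M : ℝ}
    (hx : x ∈ solidSimplex ι M) (hy : y ∈ solidSimplex ι M) (m : ℕ) :
    ∑ j : Fin m → ι, |∏ s, x (j s) - ∏ s, y (j s)| ≤ m * M ^ (m - 1) * ∑ i, |x i - y i| := by
  induction m with
  | zero => simp
  | succ m ih =>
    set d := ∑ i, |x i - y i|
    have hM : 0 ≤ M := (sum_nonneg fun i _ => hy.1 i).trans hy.2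
    have hsplit (i : ι) (j : Fin m → ι) : |x i * ∏ s, x (j s) - y i * ∏ s, y (j s)| ≤
        |x i - y i| * ∏ s, x (j s) + y i * |∏ s, x (j s) - ∏ s, y (j s)| := by
      have hpx : 0 ≤ ∏ s, x (j s) := prod_nonneg fun s _ => hx.1 _
      calc |x i * ∏ s, x (j s) - y i * ∏ s, y (j s)|
          = |(x i - y i) * ∏ s, x (j s) + y i * (∏ s, x (j s) - ∏ s, y (j s))| := by ring_nf
        _ ≤ _ := abs_add_le _ _
        _ = _ := by rw [abs_mul, abs_mul, abs_of_nonneg hpx, abs_of_nonneg (hy.1 i)]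
    have hpow : M * (m * M ^ (m - 1)) = m * M ^ m := by
      cases m with
      | zero => simp
      | succ m => rw [Nat.add_sub_cancel, pow_succ]; ring
    calc ∑ j : Fin (m + 1) → ι, |∏ s, x (j s) - ∏ s, y (j s)|
        = ∑ i, ∑ j : Fin m → ι, |x i * ∏ s, x (j s) - y i * ∏ s, y (j s)| := by
          rw [← Fintype.sum_prod_type']
          exact Fintype.sum_equiv (Fin.consEquiv fun _ => ι).symm _ _ fun j => by
            simp [Fin.prod_univ_succ, Fin.consEquiv, Fin.tail]
      _ ≤ ∑ i, ∑ j : Fin m → ι,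
            (|x i - y i| * ∏ s, x (j s) + y i * |∏ s, x (j s) - ∏ s, y (j s)|) := by
          gcongr with i _ j _; exact hsplit i j
      _ = d * (∑ i, x i) ^ m + (∑ i, y i) * ∑ j : Fin m → ι, |∏ s, x (j s) - ∏ s, y (j s)| := by
          simp only [d, sum_add_distrib, ← mul_sum, ← sum_mul, Fintype.sum_pow]
      _ ≤ d * M ^ m + M * (m * M ^ (m - 1) * d) := by
          have hd : 0 ≤ d := sum_nonneg fun i _ => abs_nonneg _
          gcongr
          · exact sum_nonneg fun i _ => hx.1 i
          · exact hx.2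
          · exact hy.2
      _ = ((m + 1 : ℕ) : ℝ) * M ^ (m + 1 - 1) * d := by
          rw [← mul_assoc, hpow, Nat.add_sub_cancel]; push_cast; ring

lemma sum_abs_sub_le_pow_mul_of_mapsTo {ι : Type*} [Fintype ι] {f : (ι → ℝ) → ι → ℝ}
    {S : Set (ι → ℝ)} {ς : ℝ} (hς : 0 ≤ ς) (hf : Set.MapsTo f S S)
    (hlip : ∀ x ∈ S, ∀ y ∈ S, ∑ i, |f x i - f y i| ≤ ς * ∑ i, |x i - y i|)
    {z : ι → ℝ} (hz : z ∈ S) (hfz : f z = z) {y : ℕ → ι → ℝ} (hy0 : y 0 ∈ S)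
    (hy : ∀ c, y (c + 1) = f (y c)) (c : ℕ) :
    ∑ i, |y c i - z i| ≤ ς ^ c * ∑ i, |y 0 i - z i| := by
  have hmem (c : ℕ) : y c ∈ S := by
    induction c with
    | zero => exact hy0
    | succ c ih => rw [hy]; exact hf ih
  induction c with
  | zero => simp
  | succ c ih =>
    calc ∑ i, |y (c + 1) i - z i| = ∑ i, |f (y c) i - f z i| := by rw [hy, hfz]
      _ ≤ ς * ∑ i, |y c i - z i| := hlip _ (hmem c) _ hz
      _ ≤ ς * (ς ^ c * ∑ i, |y 0 i - z i|) := by gcongr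
      _ = ς ^ (c + 1) * ∑ i, |y 0 i - z i| := by ring

lemma tendsto_of_sum_abs_sub_le_geometric {ι : Type*} [Fintype ι] {y : ℕ → ι → ℝ}
    {z : ι → ℝ} {ς C : ℝ} (hς0 : 0 ≤ ς) (hς1 : ς < 1) (h : ∀ c, ∑ i, |y c i - z i| ≤ ς ^ c * C) :
    Filter.Tendsto y Filter.atTop (nhds z) := by
  rw [tendsto_pi_nhds]
  intro i
  rw [← tendsto_sub_nhds_zero_iff]
  refine squeeze_zero_norm (fun c => ?_) (by simpa using
    (tendsto_pow_atTop_nhds_zero_of_lt_one hς0 hς1).mul_const C)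
  exact (single_le_sum (f := fun i => |y c i - z i|) (fun j _ => abs_nonneg _)
    (mem_univ i)).trans (h c)

section contr

variable {n m : ℕ} {P : Fin n → (Fin m → Fin n) → ℝ}

lemma contr_nonneg (hP0 : ∀ i j, 0 ≤ P i j) {z : Fin n → ℝ} (hz : ∀ i, 0 ≤ z i) (i : Fin n) :
    0 ≤ contr P z i :=
  sum_nonneg fun j _ => mul_nonneg (hP0 i j) (prod_nonneg fun _ _ => hz _)

lemma one_le_one_add_mul_sum_contr (hP0 : ∀ i j, 0 ≤ P i j) {α : ℝ} (hα0 : 0 ≤ α)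
    {z : Fin n → ℝ} (hz : ∀ i, 0 ≤ z i) : 1 ≤ 1 + α * ∑ l, contr P z l :=
  le_add_of_nonneg_right (mul_nonneg hα0 (sum_nonneg fun l _ => contr_nonneg hP0 hz l))

lemma sum_contr_le (hPs : ∀ j, ∑ i, P i j ≤ 1) {z : Fin n → ℝ}
    (hz : ∀ i, 0 ≤ z i) : ∑ l, contr P z l ≤ (∑ i, z i) ^ m := by
  simp only [contr]
  rw [sum_comm, Fintype.sum_pow]
  gcongr with j
  rw [← sum_mul]
  exact mul_le_of_le_one_left (prod_nonneg fun _ _ => hz _) (hPs j)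

lemma sum_abs_contr_sub_le (hP0 : ∀ i j, 0 ≤ P i j) (hPs : ∀ j, ∑ i, P i j ≤ 1)
    {x y : Fin n → ℝ} {M : ℝ} (hx : x ∈ solidSimplex (Fin n) M) (hy : y ∈ solidSimplex (Fin n) M) :
    ∑ i, |contr P x i - contr P y i| ≤ m * M ^ (m - 1) * ∑ i, |x i - y i| :=
  calc ∑ i, |contr P x i - contr P y i|
      ≤ ∑ i, ∑ j : Fin m → Fin n, P i j * |∏ s, x (j s) - ∏ s, y (j s)| := by
        gcongr with i
        simp only [contr, ← sum_sub_distrib]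
        refine (abs_sum_le_sum_abs _ _).trans (le_of_eq ?_)
        simp only [← mul_sub, abs_mul, abs_of_nonneg (hP0 i _)]
    _ = ∑ j : Fin m → Fin n, (∑ i, P i j) * |∏ s, x (j s) - ∏ s, y (j s)| := by
        rw [sum_comm]; simp only [sum_mul]
    _ ≤ ∑ j : Fin m → Fin n, |∏ s, x (j s) - ∏ s, y (j s)| := by
        gcongr with j; exact mul_le_of_le_one_left (abs_nonneg _) (hPs j)
    _ ≤ m * M ^ (m - 1) * ∑ i, |x i - y i| := sum_abs_prod_sub_prod_le hx hy m

end contr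

lemma rpow_neg_one_div_pow {x : ℝ} (hx : 0 ≤ x) (c : ℝ) (j : ℕ) :
    (x ^ (-1 / c)) ^ j = x ^ (-(j : ℝ) / c) := by
  rw [← rpow_natCast, ← rpow_mul hx]
  ring_nf

section Phi

variable {n k : ℕ} {P : Fin n → (Fin (k - 1) → Fin n) → ℝ} {v : Fin n → ℝ} {α : ℝ}

lemma natCast_sub_one_pos (hk : 2 ≤ k) : (0 : ℝ) < (k : ℝ) - 1 := by
  have : (2 : ℝ) ≤ k := by exact_mod_cast hk
  linarith

lemma one_add_mul_sum_contr_le (hk : 2 ≤ k) (hPs : ∀ j, ∑ i, P i j ≤ 1) (hα0 : 0 ≤ α)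
    (hα1 : α < 1) {z : Fin n → ℝ}
    (hz : z ∈ solidSimplex (Fin n) ((1 - α) ^ (-1 / ((k : ℝ) - 1)))) :
    1 + α * ∑ l, contr P z l ≤ (1 - α)⁻¹ := by
  have hS : ∑ l, contr P z l ≤ (1 - α)⁻¹ :=
    calc ∑ l, contr P z l ≤ (∑ i, z i) ^ (k - 1) := sum_contr_le hPs hz.1
      _ ≤ ((1 - α) ^ (-1 / ((k : ℝ) - 1))) ^ (k - 1) :=
        pow_le_pow_left₀ (sum_nonneg fun i _ => hz.1 i) hz.2 _
      _ = (1 - α)⁻¹ := by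
        rw [rpow_neg_one_div_pow (by linarith), Nat.cast_sub (by omega), Nat.cast_one, neg_div,
          div_self (natCast_sub_one_pos hk).ne', rpow_neg_one]
  calc 1 + α * ∑ l, contr P z l ≤ 1 + α * (1 - α)⁻¹ := by gcongr
    _ = (1 - α)⁻¹ := by field_simp [(sub_pos.mpr hα1).ne']; ring

lemma Phi_mapsTo (hk : 2 ≤ k) (hP0 : ∀ i j, 0 ≤ P i j) (hPs : ∀ j, ∑ i, P i j ≤ 1)
    (hv0 : ∀ i, 0 ≤ v i) (hv1 : ∑ i, v i = 1) (hα0 : 0 ≤ α) (hα1 : α < 1) :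
    Set.MapsTo (Phi k P v α) (solidSimplex (Fin n) ((1 - α) ^ (-1 / ((k : ℝ) - 1))))
      (solidSimplex (Fin n) ((1 - α) ^ (-1 / ((k : ℝ) - 1)))) := by
  intro z hz
  set a := 1 + α * ∑ l, contr P z l
  have ha : 0 < a := zero_lt_one.trans_le (one_le_one_add_mul_sum_contr hP0 hα0 hz.1)
  refine ⟨fun i => mul_nonneg (rpow_nonneg ha.le _)
    (add_nonneg (hv0 i) (mul_nonneg hα0 (contr_nonneg hP0 hz.1 i))), ?_⟩
  have hc := natCast_sub_one_pos hk
  calc ∑ i, Phi k P v α z i = a ^ (-((k : ℝ) - 2) / ((k : ℝ) - 1) + 1) := by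
        simp only [Phi, ← mul_sum, sum_add_distrib, hv1, rpow_add_one ha.ne']
        rfl
    _ = a ^ (1 / ((k : ℝ) - 1)) := by congr 1; field_simp; ring
    _ ≤ ((1 - α)⁻¹) ^ (1 / ((k : ℝ) - 1)) := by
        gcongr; exact one_add_mul_sum_contr_le hk hPs hα0 hα1 hz
    _ = (1 - α) ^ (-1 / ((k : ℝ) - 1)) := by
        rw [neg_div, rpow_neg (by linarith), inv_rpow (by linarith)]

lemma Phi_eq_self (hk : 2 ≤ k) (hP0 : ∀ i j, 0 ≤ P i j) (hv1 : ∑ i, v i = 1) (hα0 : 0 ≤ α)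
    {y : Fin n → ℝ} (hy0 : ∀ i, 0 ≤ y i)
    (hy : ∀ i, (∑ l, y l) ^ (k - 2) * y i - α * contr P y i = v i) :
    Phi k P v α y = y := by
  set T := ∑ l, y l
  have hT0 : 0 ≤ T := sum_nonneg fun l _ => hy0 l
  have hTpow : T ^ (k - 1) = 1 + α * ∑ l, contr P y l := by
    have hsum := sum_congr rfl fun i (_ : i ∈ univ) => hy i
    rw [sum_sub_distrib, ← mul_sum, ← mul_sum, hv1, ← pow_succ,
      show k - 2 + 1 = k - 1 by omega] at hsum
    linarith
  have hT : 0 < T := by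
    have h1 : 1 ≤ T ^ (k - 1) := hTpow ▸ one_le_one_add_mul_sum_contr hP0 hα0 hy0
    exact zero_lt_one.trans_le ((one_le_pow_iff_of_nonneg hT0 (by omega)).mp h1)
  have hinv : (T ^ (k - 1)) ^ (-((k : ℝ) - 2) / ((k : ℝ) - 1)) = (T ^ (k - 2))⁻¹ := by
    rw [← rpow_natCast, ← rpow_mul hT0, ← rpow_natCast, ← rpow_neg hT0,
      Nat.cast_sub (by omega), Nat.cast_sub hk]
    congr 1
    field_simp [(natCast_sub_one_pos hk).ne']
    push_cast; ring
  funext i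
  have hvi : v i + α * contr P y i = T ^ (k - 2) * y i := by linarith [hy i]
  simp only [Phi, hvi, ← hTpow, hinv, inv_mul_cancel_left₀ (pow_pos hT _).ne']

lemma sum_abs_contr_sub_le_of_mem (hk : 2 ≤ k) (hP0 : ∀ i j, 0 ≤ P i j)
    (hPs : ∀ j, ∑ i, P i j ≤ 1) (hα1 : α < 1) {x y : Fin n → ℝ}
    (hx : x ∈ solidSimplex (Fin n) ((1 - α) ^ (-1 / ((k : ℝ) - 1))))
    (hy : y ∈ solidSimplex (Fin n) ((1 - α) ^ (-1 / ((k : ℝ) - 1)))) :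
    ∑ i, |contr P x i - contr P y i| ≤
      ((k : ℝ) - 1) * (1 - α) ^ (-((k : ℝ) - 2) / ((k : ℝ) - 1)) * ∑ i, |x i - y i| := by
  have := sum_abs_contr_sub_le hP0 hPs hx hy (P := P)
  rwa [show k - 1 - 1 = k - 2 by omega, rpow_neg_one_div_pow (by linarith),
    Nat.cast_sub (by omega), Nat.cast_sub hk, Nat.cast_one, Nat.cast_ofNat] at this

lemma abs_Phi_sub_le (hP0 : ∀ i j, 0 ≤ P i j) (hv0 : ∀ i, 0 ≤ v i) (hα0 : 0 ≤ α)
    {θ : ℝ} (hθ : θ = ((k : ℝ) - 2) / ((k : ℝ) - 1)) (hθ0 : 0 ≤ θ) {x y : Fin n → ℝ}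
    (hx : ∀ i, 0 ≤ x i) (hS : ∑ l, contr P x l ≤ ∑ l, contr P y l)
    (i : Fin n) :
    |Phi k P v α x i - Phi k P v α y i| ≤
      ((1 + α * ∑ l, contr P x l) ^ (-θ) - (1 + α * ∑ l, contr P y l) ^ (-θ)) *
        (v i + α * contr P x i) + α * |contr P x i - contr P y i| := by
  set a := 1 + α * ∑ l, contr P x l
  set b := 1 + α * ∑ l, contr P y l
  have ha : 1 ≤ a := one_le_one_add_mul_sum_contr hP0 hα0 hx
  have hab : a ≤ b := add_le_add_right (mul_le_mul_of_nonneg_left hS hα0) 1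
  have hdecomp : Phi k P v α x i - Phi k P v α y i =
      (a ^ (-θ) - b ^ (-θ)) * (v i + α * contr P x i) +
        b ^ (-θ) * (α * (contr P x i - contr P y i)) := by
    simp only [Phi, neg_div, hθ]; ring
  have hdrop : 0 ≤ a ^ (-θ) - b ^ (-θ) := sub_nonneg.mpr
    (rpow_le_rpow_of_nonpos (by linarith) hab (neg_nonpos.mpr hθ0))
  rw [hdecomp]
  refine (abs_add_le _ _).trans (add_le_add (abs_of_nonneg ?_).le ?_)
  · exact mul_nonneg hdrop (add_nonneg (hv0 i) (mul_nonneg hα0 (contr_nonneg hP0 hx i)))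
  · rw [abs_mul, abs_mul, abs_of_nonneg (rpow_nonneg (by linarith) _), abs_of_nonneg hα0]
    exact mul_le_of_le_one_left (by positivity)
      (rpow_le_one_of_one_le_of_nonpos (ha.trans hab) (by linarith))

lemma sum_abs_Phi_sub_le (hk : 2 ≤ k) (hP0 : ∀ i j, 0 ≤ P i j) (hPs : ∀ j, ∑ i, P i j ≤ 1)
    (hv0 : ∀ i, 0 ≤ v i) (hv1 : ∑ i, v i = 1) (hα0 : 0 ≤ α) (hα1 : α < 1) {x y : Fin n → ℝ}
    (hx : x ∈ solidSimplex (Fin n) ((1 - α) ^ (-1 / ((k : ℝ) - 1))))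
    (hy : y ∈ solidSimplex (Fin n) ((1 - α) ^ (-1 / ((k : ℝ) - 1)))) :
    ∑ i, |Phi k P v α x i - Phi k P v α y i| ≤
      (2 * (k : ℝ) - 3) * α * (1 - α) ^ (-((k : ℝ) - 2) / ((k : ℝ) - 1)) * ∑ i, |x i - y i| := by
  wlog hS : ∑ l, contr P x l ≤ ∑ l, contr P y l generalizing x y
  · simpa only [abs_sub_comm] using this hy hx (le_of_not_ge hS)
  have hc := natCast_sub_one_pos hk
  set θ := ((k : ℝ) - 2) / ((k : ℝ) - 1) with hθ
  have hk2 : (2 : ℝ) ≤ k := by exact_mod_cast hk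
  have hθ0 : 0 ≤ θ := div_nonneg (by linarith) hc.le
  have hθ1 : θ ≤ 1 := (div_le_one hc).mpr (by linarith)
  set a := 1 + α * ∑ l, contr P x l
  set b := 1 + α * ∑ l, contr P y l
  set D := ∑ i, |contr P x i - contr P y i|
  have ha : 1 ≤ a := one_le_one_add_mul_sum_contr hP0 hα0 hx.1
  have hab : a ≤ b := add_le_add_right (mul_le_mul_of_nonneg_left hS hα0) 1
  have hba : b - a ≤ α * D := by
    rw [show b - a = α * ∑ i, (contr P y i - contr P x i) by
      simp only [a, b, sum_sub_distrib]; ring]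
    exact mul_le_mul_of_nonneg_left
      (sum_le_sum fun i _ => (le_abs_self _).trans (abs_sub_comm _ _).le) hα0
  calc ∑ i, |Phi k P v α x i - Phi k P v α y i|
      ≤ ∑ i, ((a ^ (-θ) - b ^ (-θ)) * (v i + α * contr P x i) +
          α * |contr P x i - contr P y i|) :=
        sum_le_sum fun i _ => abs_Phi_sub_le hP0 hv0 hα0 hθ hθ0 hx.1 hS i
    _ = a * (a ^ (-θ) - b ^ (-θ)) + α * D := by
        simp only [sum_add_distrib, ← mul_sum, hv1, a]; ring
    _ ≤ θ * (α * D) + α * D := by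
        refine add_le_add_left ?_ _
        exact (mul_rpow_neg_sub_rpow_neg_le hθ0 hθ1 (by linarith) hab (ha.trans hab)).trans
          (mul_le_mul_of_nonneg_left hba hθ0)
    _ = (1 + θ) * α * D := by ring
    _ ≤ (1 + θ) * α * (((k : ℝ) - 1) * (1 - α) ^ (-((k : ℝ) - 2) / ((k : ℝ) - 1)) *
          ∑ i, |x i - y i|) := by
        gcongr; exact sum_abs_contr_sub_le_of_mem hk hP0 hPs hα1 hx hy
    _ = _ := by
        rw [show 2 * (k : ℝ) - 3 = (1 + θ) * ((k : ℝ) - 1) by rw [hθ]; field_simp; ring]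
        ring

end Phi

theorem splitting_linear_convergence_general (n k : ℕ) (hk : 2 ≤ k)
    (P : Fin n → (Fin (k-1) → Fin n) → ℝ)
    (hP0 : ∀ i j, 0 ≤ P i j) (hPs : ∀ j, ∑ i, P i j ≤ 1)
    (v : Fin n → ℝ) (hv0 : ∀ i, 0 ≤ v i) (hv1 : ∑ i, v i = 1)
    (α : ℝ) (hα0 : 0 ≤ α) (hα1 : α < 1)
    (hς : (2*(k:ℝ)-3) * α * (1 - α) ^ (-((k:ℝ)-2)/((k:ℝ)-1)) < 1)
    (ystar : Fin n → ℝ) (hys0 : ∀ i, 0 ≤ ystar i)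
    (hysΔ : ∑ i, ystar i ≤ (1 - α) ^ (-(1:ℝ)/((k:ℝ)-1)))
    (hyseq : ∀ i, (∑ l, ystar l) ^ (k-2) * ystar i - α * contr P ystar i = v i)
    (y0 : Fin n → ℝ) (hy00 : ∀ i, 0 ≤ y0 i)
    (hy0Δ : ∑ i, y0 i ≤ (1 - α) ^ (-(1:ℝ)/((k:ℝ)-1)))
    (y : ℕ → Fin n → ℝ) (hseq0 : y 0 = y0)
    (hseq : ∀ c, y (c+1) = Phi k P v α (y c)) :
    (∀ c, ∑ i, |y c i - ystar i| ≤
        ((2*(k:ℝ)-3) * α * (1 - α) ^ (-((k:ℝ)-2)/((k:ℝ)-1))) ^ c * ∑ i, |y0 i - ystar i|) ∧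
    Filter.Tendsto y Filter.atTop (nhds ystar) := by
  have hς0 : 0 ≤ (2*(k:ℝ)-3) * α * (1 - α) ^ (-((k:ℝ)-2)/((k:ℝ)-1)) := by
    have : (2 : ℝ) ≤ k := by exact_mod_cast hk
    exact mul_nonneg (mul_nonneg (by linarith) hα0) (rpow_nonneg (by linarith) _)
  have hbound := sum_abs_sub_le_pow_mul_of_mapsTo hς0
    (Phi_mapsTo hk hP0 hPs hv0 hv1 hα0 hα1)
    (fun x hx y hy => sum_abs_Phi_sub_le hk hP0 hPs hv0 hv1 hα0 hα1 hx hy)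
    ⟨hys0, hysΔ⟩ (Phi_eq_self hk hP0 hv1 hα0 hys0 hyseq) (hseq0 ▸ ⟨hy00, hy0Δ⟩) hseq
  rw [hseq0] at hbound
  exact ⟨hbound, tendsto_of_sum_abs_sub_le_geometric hς0 hς hbound⟩

theorem splitting_linear_convergence (n k : ℕ) (hn : 0 < n) (hk : 2 ≤ k)
    (P : Fin n → (Fin (k-1) → Fin n) → ℝ)
    (hP0 : ∀ i j, 0 ≤ P i j) (hPs : ∀ j, ∑ i, P i j ≤ 1)
    (v : Fin n → ℝ) (hv0 : ∀ i, 0 ≤ v i) (hv1 : ∑ i, v i = 1)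
    (α : ℝ) (hα0 : 0 ≤ α) (hα1 : α < 1)
    (hς : (2*(k:ℝ)-3) * α * (1 - α) ^ (-((k:ℝ)-2)/((k:ℝ)-1)) < 1)
    (ystar : Fin n → ℝ) (hys0 : ∀ i, 0 ≤ ystar i)
    (hysΔ : ∑ i, ystar i ≤ (1 - α) ^ (-(1:ℝ)/((k:ℝ)-1)))
    (hyseq : ∀ i, (∑ l, ystar l) ^ (k-2) * ystar i - α * contr P ystar i = v i)
    (y0 : Fin n → ℝ) (hy00 : ∀ i, 0 ≤ y0 i)
    (hy0Δ : ∑ i, y0 i ≤ (1 - α) ^ (-(1:ℝ)/((k:ℝ)-1)))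
    (y : ℕ → Fin n → ℝ) (hseq0 : y 0 = y0)
    (hseq : ∀ c, y (c+1) = Phi k P v α (y c)) :
    (∀ c, ∑ i, |y c i - ystar i| ≤
        ((2*(k:ℝ)-3) * α * (1 - α) ^ (-((k:ℝ)-2)/((k:ℝ)-1))) ^ c * ∑ i, |y0 i - ystar i|) ∧
    Filter.Tendsto y Filter.atTop (nhds ystar) :=
  splitting_linear_convergence_general n k hk P hP0 hPs v hv0 hv1 α hα0 hα1 hς ystar hys0 hysΔ hyseq
    y0 hy00 hy0Δ y hseq0 hseq
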